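/- arXiv:2211.11898 — 5 statements merged into one kernel-verified Lean document; each statement's English description precedes it below -/
import Mathlib

section
/- Let {Z_t}_{t≥1} be a d-dimensional stochastic process on a standard Borel probability space such that: (i) for every m ≥ 1 and all times t₁ < … < t_m, the random vector (Z_{t₁},…,Z_{t_m}) is jointly Gaussian with positive definite covariance matrix; (ii) the process is strictly stationary, i.e. for every m ≥ 1 and all s, t ≥ 0 the laws of (Z_{s+1},…,Z_{s+m}) and (Z_{t+1},…,Z_{t+m}) coincide; (iii) the process is Markov of order k ≥ 1, i.e. for every t > k+1, Z_t is conditionally independent of (Z_1,…,Z_{t−k−1}) given (Z_{t−1},…,Z_{t−k}). Let S be a nonempty proper subset of {1,…,d}; write Z_{S,t} for the subvector of Z_t with coordinates in S and Z_{−S,t} for the subvector with coordinates in the complement of S. Assume at least one of the following holds: (1) for every t > k, Z_{S,t} is conditionally independent of (Z_{−S,t−1},…,Z_{−S,t−k}) given (Z_{S,t−1},…,Z_{S,t−k}); (2) for every t > k+1, Z_{S,t−k−1} is conditionally independent of (Z_{−S,t−1},…,Z_{−S,t−k}) given (Z_{S,t−1},…,Z_{S,t−k}). Then the subprocess {Z_{S,t}}_{t≥1}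 is Markov of order k: for all t and l with k < l < t, Z_{S,t} is conditionally independent of Z_{S,t−l} given (Z_{S,t−1},…,Z_{S,t−l+1}). -/
open MeasureTheory ProbabilityTheory

/-- A probability law on a finite-dimensional space `ι → ℝ` is Gaussian if its pushforward
under every linear functional is a one-dimensional Gaussian measure. -/
def IsGaussianLaw {ι : Type*} [Fintype ι] (ν : Measure (ι → ℝ)) : Prop :=
  ∀ l : (ι → ℝ) →ₗ[ℝ] ℝ, ∃ (m : ℝ) (v : NNReal), ν.map l = gaussianReal m v

/-- The covariance matrix of a random vector `X : Ω → ι → ℝ` under the measure `P`. -/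
noncomputable def covMatrix {Ω : Type*} [MeasurableSpace Ω] (P : Measure Ω) {ι : Type*}
    (X : Ω → ι → ℝ) : Matrix ι ι ℝ :=
  Matrix.of fun i j =>
    ∫ ω, (X ω i - ∫ ω', X ω' i ∂P) * (X ω j - ∫ ω', X ω' j ∂P) ∂P

/-- A reindexed collection of coordinates of a measurable process is measurable. -/
lemma measurable_reindex {Ω : Type*} [MeasurableSpace Ω] {d : ℕ}
    {Z : ℕ → Ω → Fin d → ℝ} (hZ : ∀ t, Measurable (Z t))
    {ι : Type*} (τ : ι → ℕ) (c : ι → Fin d) :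
    Measurable (fun ω (i : ι) => Z (τ i) ω (c i)) :=
  measurable_pi_lambda _ fun i => (measurable_pi_apply (c i)).comp (hZ (τ i))

/-! ### Infrastructure: conditional expectation characterization of conditional independence -/

set_option linter.unusedSectionVars false

lemma setIntegral_eq_on_sup {Ω γ : Type*} {m₁ : MeasurableSpace Ω}
    [mΩ : MeasurableSpace Ω] [mγ : MeasurableSpace γ] {μ : Measure Ω}
    (hm₁ : m₁ ≤ mΩ) {g : Ω → γ} (hg : Measurable g)
    {u v : Ω → ℝ} (hu : Integrable u μ) (hv : Integrable v μ)
    (h : ∀ B C, MeasurableSet[m₁] B → MeasurableSet C →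
      ∫ ω in B ∩ g ⁻¹' C, u ω ∂μ = ∫ ω in B ∩ g ⁻¹' C, v ω ∂μ) :
    ∀ D, MeasurableSet[m₁ ⊔ MeasurableSpace.comap g mγ] D →
      ∫ ω in D, u ω ∂μ = ∫ ω in D, v ω ∂μ := by
  have hsup : (m₁ ⊔ MeasurableSpace.comap g mγ) ≤ mΩ := sup_le hm₁ hg.comap_le
  set p : Set (Set Ω) :=
    {D | ∃ B C, MeasurableSet[m₁] B ∧ MeasurableSet C ∧ D = B ∩ g ⁻¹' C} with hp
  have hgen : (m₁ ⊔ MeasurableSpace.comap g mγ) = MeasurableSpace.generateFrom p := by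
    refine le_antisymm (sup_le ?_ ?_) (MeasurableSpace.generateFrom_le ?_)
    · intro s hs
      exact MeasurableSpace.measurableSet_generateFrom ⟨s, Set.univ, hs, .univ, by simp⟩
    · rintro s ⟨C, hC, rfl⟩
      exact MeasurableSpace.measurableSet_generateFrom
        ⟨Set.univ, C, MeasurableSet.univ, hC, by simp⟩
    · rintro D ⟨B, C, hB, hC, rfl⟩
      exact ((le_sup_left : m₁ ≤ _) B hB).inter
        ((le_sup_right : MeasurableSpace.comap g mγ ≤ _) (g ⁻¹' C) ⟨C, hC, rfl⟩)
  have hpi : IsPiSystem p := by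
    rintro D₁ ⟨B₁, C₁, hB₁, hC₁, rfl⟩ D₂ ⟨B₂, C₂, hB₂, hC₂, rfl⟩ -
    exact ⟨B₁ ∩ B₂, C₁ ∩ C₂, hB₁.inter hB₂, hC₁.inter hC₂, by
      rw [Set.preimage_inter]; exact Set.inter_inter_inter_comm _ _ _ _⟩
  have htot : ∫ ω, u ω ∂μ = ∫ ω, v ω ∂μ := by
    have := h Set.univ Set.univ MeasurableSet.univ MeasurableSet.univ
    simpa using this
  refine MeasurableSpace.induction_on_inter
    (m := m₁ ⊔ MeasurableSpace.comap g mγ) hgen hpi (by simp) ?_ ?_ ?_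
  · rintro D ⟨B, C, hB, hC, rfl⟩; exact h B C hB hC
  · intro D hDm hD
    have hD' : MeasurableSet[mΩ] D := hsup _ hDm
    have h1 := integral_add_compl hD' hu
    have h2 := integral_add_compl hD' hv
    linarith
  · intro f hdisj hfm hIH
    rw [integral_iUnion (fun i => hsup _ (hfm i)) hdisj hu.integrableOn,
        integral_iUnion (fun i => hsup _ (hfm i)) hdisj hv.integrableOn]
    exact tsum_congr hIH

section Char
variable {Ω β γ : Type*} {m' : MeasurableSpace Ω}
    [mΩ : MeasurableSpace Ω] [StandardBorelSpace Ω]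
    [mβ : MeasurableSpace β] [mγ : MeasurableSpace γ]
    {μ : Measure Ω} [IsProbabilityMeasure μ]
    {f : Ω → β} {g : Ω → γ}

/-- From conditional independence, the conditional expectation of an event of `f` given the
join `m' ⊔ σ(g)` is the conditional expectation given `m'`. -/
lemma condexp_sup_of_condIndepFun {hm' : m' ≤ mΩ}
    (hf : Measurable f) (hg : Measurable g)
    (hCI : CondIndepFun m' hm' f g μ) {s : Set β} (hs : MeasurableSet s) :
    μ⟦f ⁻¹' s | m' ⊔ MeasurableSpace.comap g mγ⟧ =ᵐ[μ] μ⟦f ⁻¹' s | m'⟧ := by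
  have hm2 : (m' ⊔ MeasurableSpace.comap g mγ) ≤ mΩ := sup_le hm' hg.comap_le
  have hA : MeasurableSet (f ⁻¹' s) := hf hs
  have hprod := (condIndepFun_iff_condExp_inter_preimage_eq_mul hf hg).mp hCI
  refine (ae_eq_condExp_of_forall_setIntegral_eq hm2
      ((integrable_const (1 : ℝ)).indicator hA)
      (fun D _ _ => integrable_condExp.integrableOn)
      (fun D hD _ => ?_)
      (StronglyMeasurable.aestronglyMeasurable (stronglyMeasurable_condExp.mono le_sup_left))).symm
  refine setIntegral_eq_on_sup hm' hg integrable_condExp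
    ((integrable_const (1 : ℝ)).indicator hA) ?_ D hD
  intro B C hB hC
  have hGm : MeasurableSet (g ⁻¹' C) := hg hC
  have hint' : Integrable (fun ω => (g ⁻¹' C).indicator (fun _ => (1 : ℝ)) ω
      * (μ⟦f ⁻¹' s | m'⟧) ω) μ :=
    Integrable.bdd_mul integrable_condExp
      ((stronglyMeasurable_const.indicator hGm).aestronglyMeasurable)
      (c := 1) (Filter.Eventually.of_forall fun x => by by_cases hx : x ∈ g ⁻¹' C <;> simp [hx])
  have hint : Integrable (fun ω => (μ⟦f ⁻¹' s | m'⟧) ω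
      * (g ⁻¹' C).indicator (fun _ => (1 : ℝ)) ω) μ :=
    hint'.congr (Filter.Eventually.of_forall fun ω => mul_comm _ _)
  have hpull : μ[(fun ω => (μ⟦f ⁻¹' s | m'⟧) ω * (g ⁻¹' C).indicator (fun _ => (1 : ℝ)) ω) | m']
      =ᵐ[μ] fun ω => (μ⟦f ⁻¹' s | m'⟧) ω * (μ⟦g ⁻¹' C | m'⟧) ω :=
    condExp_mul_of_stronglyMeasurable_left stronglyMeasurable_condExp hint
      ((integrable_const (1 : ℝ)).indicator hGm)
  have hkey : μ[(fun ω => (μ⟦f ⁻¹' s | m'⟧) ω * (g ⁻¹' C).indicator (fun _ => (1 : ℝ)) ω) | m']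
      =ᵐ[μ] μ⟦f ⁻¹' s ∩ g ⁻¹' C | m'⟧ := hpull.trans (hprod s C hs hC).symm
  calc ∫ ω in B ∩ g ⁻¹' C, (μ⟦f ⁻¹' s | m'⟧) ω ∂μ
      = ∫ ω in B, (g ⁻¹' C).indicator (μ⟦f ⁻¹' s | m'⟧) ω ∂μ :=
        (setIntegral_indicator hGm).symm
    _ = ∫ ω in B, (μ⟦f ⁻¹' s | m'⟧) ω * (g ⁻¹' C).indicator (fun _ => (1 : ℝ)) ω ∂μ := by
        refine integral_congr_ae (Filter.Eventually.of_forall fun ω => ?_)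
        by_cases hω : ω ∈ g ⁻¹' C <;> simp [hω]
    _ = ∫ ω in B, (μ[(fun ω => (μ⟦f ⁻¹' s | m'⟧) ω
          * (g ⁻¹' C).indicator (fun _ => (1 : ℝ)) ω) | m']) ω ∂μ :=
        (setIntegral_condExp hm' hint hB).symm
    _ = ∫ ω in B, (μ⟦f ⁻¹' s ∩ g ⁻¹' C | m'⟧) ω ∂μ :=
        integral_congr_ae (ae_restrict_of_ae hkey)
    _ = ∫ ω in B, Set.indicator (f ⁻¹' s ∩ g ⁻¹' C) (fun _ => (1 : ℝ)) ω ∂μ :=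
        setIntegral_condExp hm' ((integrable_const (1 : ℝ)).indicator (hA.inter hGm)) hB
    _ = ∫ ω in B ∩ g ⁻¹' C, Set.indicator (f ⁻¹' s) (fun _ => (1 : ℝ)) ω ∂μ := by
        rw [setIntegral_indicator (hA.inter hGm), setIntegral_indicator hA]
        have : B ∩ (f ⁻¹' s ∩ g ⁻¹' C) = B ∩ g ⁻¹' C ∩ f ⁻¹' s := by
          ext x; simp only [Set.mem_inter_iff]; tauto
        rw [this]

/-- Converse: the conditional-expectation property implies conditional independence. -/
lemma condIndepFun_of_condexp_sup (hm' : m' ≤ mΩ)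
    (hf : Measurable f) (hg : Measurable g)
    (h : ∀ s : Set β, MeasurableSet s →
      μ⟦f ⁻¹' s | m' ⊔ MeasurableSpace.comap g mγ⟧ =ᵐ[μ] μ⟦f ⁻¹' s | m'⟧) :
    CondIndepFun m' hm' f g μ := by
  rw [condIndepFun_iff_condExp_inter_preimage_eq_mul hf hg]
  intro s t hs ht
  have hm2 : (m' ⊔ MeasurableSpace.comap g mγ) ≤ mΩ := sup_le hm' hg.comap_le
  have hA : MeasurableSet (f ⁻¹' s) := hf hs
  have hB : MeasurableSet (g ⁻¹' t) := hg ht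
  have hBm2 : MeasurableSet[m' ⊔ MeasurableSpace.comap g mγ] (g ⁻¹' t) :=
    (le_sup_right : MeasurableSpace.comap g mγ ≤ _) _ ⟨t, ht, rfl⟩
  have e0 : Set.indicator (f ⁻¹' s ∩ g ⁻¹' t) (fun _ => (1 : ℝ))
      = fun ω => (g ⁻¹' t).indicator (fun _ => (1 : ℝ)) ω
        * (f ⁻¹' s).indicator (fun _ => (1 : ℝ)) ω := by
    funext ω
    by_cases h1 : ω ∈ f ⁻¹' s <;> by_cases h2 : ω ∈ g ⁻¹' t <;>
      simp [Set.indicator_apply, h1, h2]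
  have hintAB : Integrable (fun ω => (g ⁻¹' t).indicator (fun _ => (1 : ℝ)) ω
      * (f ⁻¹' s).indicator (fun _ => (1 : ℝ)) ω) μ := by
    rw [← e0]; exact (integrable_const (1 : ℝ)).indicator (hA.inter hB)
  have step1 : μ⟦f ⁻¹' s ∩ g ⁻¹' t | m'⟧
      =ᵐ[μ] μ[(μ[(fun ω => (g ⁻¹' t).indicator (fun _ => (1 : ℝ)) ω
        * (f ⁻¹' s).indicator (fun _ => (1 : ℝ)) ω) | m' ⊔ MeasurableSpace.comap g mγ]) | m'] := by
    rw [show μ⟦f ⁻¹' s ∩ g ⁻¹' t | m'⟧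
        = μ[(fun ω => (g ⁻¹' t).indicator (fun _ => (1 : ℝ)) ω
          * (f ⁻¹' s).indicator (fun _ => (1 : ℝ)) ω) | m'] from by rw [← e0]]
    exact (condExp_condExp_of_le le_sup_left hm2).symm
  have step2 : μ[(fun ω => (g ⁻¹' t).indicator (fun _ => (1 : ℝ)) ω
        * (f ⁻¹' s).indicator (fun _ => (1 : ℝ)) ω) | m' ⊔ MeasurableSpace.comap g mγ]
      =ᵐ[μ] fun ω => (g ⁻¹' t).indicator (fun _ => (1 : ℝ)) ω
        * (μ⟦f ⁻¹' s | m' ⊔ MeasurableSpace.comap g mγ⟧) ω :=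
    condExp_mul_of_stronglyMeasurable_left (stronglyMeasurable_const.indicator hBm2)
      hintAB ((integrable_const (1 : ℝ)).indicator hA)
  have step3 : (fun ω => (g ⁻¹' t).indicator (fun _ => (1 : ℝ)) ω
        * (μ⟦f ⁻¹' s | m' ⊔ MeasurableSpace.comap g mγ⟧) ω)
      =ᵐ[μ] fun ω => (g ⁻¹' t).indicator (fun _ => (1 : ℝ)) ω * (μ⟦f ⁻¹' s | m'⟧) ω := by
    filter_upwards [h s hs] with ω hω
    rw [hω]
  have hint2 : Integrable (fun ω => (g ⁻¹' t).indicator (fun _ => (1 : ℝ)) ω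
      * (μ⟦f ⁻¹' s | m'⟧) ω) μ :=
    Integrable.bdd_mul integrable_condExp
      ((stronglyMeasurable_const.indicator hB).aestronglyMeasurable)
      (c := 1) (Filter.Eventually.of_forall fun x => by by_cases hx : x ∈ g ⁻¹' t <;> simp [hx])
  have step4 : μ[(fun ω => (g ⁻¹' t).indicator (fun _ => (1 : ℝ)) ω
        * (μ⟦f ⁻¹' s | m'⟧) ω) | m']
      =ᵐ[μ] fun ω => (μ⟦f ⁻¹' s | m'⟧) ω * (μ⟦g ⁻¹' t | m'⟧) ω := by
    have hcomm : (fun ω => (g ⁻¹' t).indicator (fun _ => (1 : ℝ)) ω * (μ⟦f ⁻¹' s | m'⟧) ω)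
        = fun ω => (μ⟦f ⁻¹' s | m'⟧) ω * (g ⁻¹' t).indicator (fun _ => (1 : ℝ)) ω := by
      funext ω; exact mul_comm _ _
    rw [hcomm]
    exact condExp_mul_of_stronglyMeasurable_left stronglyMeasurable_condExp
      (hint2.congr (Filter.Eventually.of_forall fun ω => mul_comm _ _))
      ((integrable_const (1 : ℝ)).indicator hB)
  calc μ⟦f ⁻¹' s ∩ g ⁻¹' t | m'⟧
      =ᵐ[μ] μ[(μ[(fun ω => (g ⁻¹' t).indicator (fun _ => (1 : ℝ)) ω
        * (f ⁻¹' s).indicator (fun _ => (1 : ℝ)) ω) | m' ⊔ MeasurableSpace.comap g mγ]) | m'] :=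
        step1
    _ =ᵐ[μ] μ[(fun ω => (g ⁻¹' t).indicator (fun _ => (1 : ℝ)) ω
        * (μ⟦f ⁻¹' s | m'⟧) ω) | m'] := condExp_congr_ae (step2.trans step3)
    _ =ᵐ[μ] fun ω => (μ⟦f ⁻¹' s | m'⟧) ω * (μ⟦g ⁻¹' t | m'⟧) ω := step4

end Char

lemma condexp_eq_of_condIndepFun {Ω β γ : Type*} {m' mJ : MeasurableSpace Ω}
    [mΩ : MeasurableSpace Ω] [StandardBorelSpace Ω]
    [mβ : MeasurableSpace β] [mγ : MeasurableSpace γ]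
    {μ : Measure Ω} [IsProbabilityMeasure μ] {f : Ω → β} {g : Ω → γ}
    {hm' : m' ≤ mΩ} (hf : Measurable f) (hg : Measurable g)
    (hCI : CondIndepFun m' hm' f g μ)
    (hJ : mJ = m' ⊔ MeasurableSpace.comap g mγ) {s : Set β} (hs : MeasurableSet s) :
    μ⟦f ⁻¹' s | mJ⟧ =ᵐ[μ] μ⟦f ⁻¹' s | m'⟧ := by
  rw [hJ]; exact condexp_sup_of_condIndepFun hf hg hCI hs

section Between
variable {Ω β γ : Type*} {m' mA mB : MeasurableSpace Ω}
    [mΩ : MeasurableSpace Ω] [StandardBorelSpace Ω]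
    [mβ : MeasurableSpace β] [mγ : MeasurableSpace γ]
    {μ : Measure Ω} [IsProbabilityMeasure μ] {f : Ω → β} {g : Ω → γ}

lemma condIndepFun_of_between (hm' : m' ≤ mΩ) (hmB : mB ≤ mΩ) (hAF : mA ≤ m')
    (hFgB : m' ⊔ MeasurableSpace.comap g mγ ≤ mB)
    (hf : Measurable f) (hg : Measurable g)
    (H : ∀ s : Set β, MeasurableSet s → μ⟦f ⁻¹' s | mB⟧ =ᵐ[μ] μ⟦f ⁻¹' s | mA⟧) :
    CondIndepFun m' hm' f g μ := by
  refine condIndepFun_of_condexp_sup hm' hf hg fun s hs => ?_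
  have key : ∀ m₃ : MeasurableSpace Ω, mA ≤ m₃ → m₃ ≤ mB →
      μ⟦f ⁻¹' s | m₃⟧ =ᵐ[μ] μ⟦f ⁻¹' s | mA⟧ := by
    intro m₃ h₁ h₂
    have hm₃ : m₃ ≤ mΩ := h₂.trans hmB
    calc μ⟦f ⁻¹' s | m₃⟧
        =ᵐ[μ] μ[(μ⟦f ⁻¹' s | mB⟧) | m₃] := (condExp_condExp_of_le h₂ hmB).symm
      _ =ᵐ[μ] μ[(μ⟦f ⁻¹' s | mA⟧) | m₃] := condExp_congr_ae (H s hs)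
      _ =ᵐ[μ] μ⟦f ⁻¹' s | mA⟧ := by
          rw [condExp_of_stronglyMeasurable hm₃
            (stronglyMeasurable_condExp.mono h₁) integrable_condExp]
  exact (key _ (hAF.trans le_sup_left) hFgB).trans (key m' hAF (le_sup_left.trans hFgB)).symm

end Between

section MOf
variable {Ω : Type*} [mΩ : MeasurableSpace Ω] {d : ℕ}

/-- The σ-algebra generated by a family of coordinates of the process. -/
def mOf (Z : ℕ → Ω → Fin d → ℝ) {ι : Type*} (F : ι → ℕ × Fin d) : MeasurableSpace Ω :=
  ⨆ i, MeasurableSpace.comap (fun ω => Z (F i).1 ω (F i).2) inferInstance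

lemma mOf_eq (Z : ℕ → Ω → Fin d → ℝ) {ι : Type*} (F : ι → ℕ × Fin d) :
    MeasurableSpace.comap (fun ω (i : ι) => Z (F i).1 ω (F i).2) inferInstance = mOf Z F := by
  show MeasurableSpace.comap _
      (⨆ i : ι, MeasurableSpace.comap (fun v : ι → ℝ => v i) inferInstance) = _
  rw [MeasurableSpace.comap_iSup]
  exact iSup_congr fun i => MeasurableSpace.comap_comp

lemma mOf_eq2 (Z : ℕ → Ω → Fin d → ℝ) {ι : Type*} (τ : ι → ℕ) (c : ι → Fin d) :
    MeasurableSpace.comap (fun ω (i : ι) => Z (τ i) ω (c i)) inferInstance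
      = mOf Z (fun i => (τ i, c i)) := by
  show MeasurableSpace.comap _
      (⨆ i : ι, MeasurableSpace.comap (fun v : ι → ℝ => v i) inferInstance) = _
  rw [MeasurableSpace.comap_iSup]
  exact iSup_congr fun i => MeasurableSpace.comap_comp

lemma mOf_le_mOf {Z : ℕ → Ω → Fin d → ℝ} {ι ι' : Type*} {F : ι → ℕ × Fin d}
    {G : ι' → ℕ × Fin d} (h : ∀ i, ∃ j, G j = F i) : mOf Z F ≤ mOf Z G := by
  refine iSup_le fun i => ?_
  obtain ⟨j, hj⟩ := h i
  rw [← hj]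
  exact le_iSup (fun j => MeasurableSpace.comap
    (fun ω => Z (G j).1 ω (G j).2) inferInstance) j

lemma mOf_le {Z : ℕ → Ω → Fin d → ℝ} (hZ : ∀ t, Measurable (Z t)) {ι : Type*}
    (F : ι → ℕ × Fin d) : mOf Z F ≤ mΩ :=
  iSup_le fun _ => Measurable.comap_le ((measurable_pi_apply _).comp (hZ _))

lemma mOf_congr {Z : ℕ → Ω → Fin d → ℝ} {ι ι' : Type*} {F : ι → ℕ × Fin d}
    {G : ι' → ℕ × Fin d} (h1 : ∀ i, ∃ j, G j = F i) (h2 : ∀ j, ∃ i, F i = G j) :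
    mOf Z F = mOf Z G :=
  le_antisymm (mOf_le_mOf h1) (mOf_le_mOf h2)

lemma mOf_sup {Z : ℕ → Ω → Fin d → ℝ} {ι ι' : Type*} (F : ι → ℕ × Fin d)
    (G : ι' → ℕ × Fin d) : mOf Z F ⊔ mOf Z G = mOf Z (Sum.elim F G) := by
  apply le_antisymm
  · exact sup_le (mOf_le_mOf fun i => ⟨Sum.inl i, rfl⟩)
      (mOf_le_mOf fun j => ⟨Sum.inr j, rfl⟩)
  · refine iSup_le fun x => ?_
    cases x with
    | inl i => exact le_sup_of_le_left (le_iSup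
        (fun i => MeasurableSpace.comap (fun ω => Z (F i).1 ω (F i).2) inferInstance) i)
    | inr j => exact le_sup_of_le_right (le_iSup
        (fun j => MeasurableSpace.comap (fun ω => Z (G j).1 ω (G j).2) inferInstance) j)

lemma mOf_sup_eq {Z : ℕ → Ω → Fin d → ℝ} {ι ι' κ : Type*} {F : ι → ℕ × Fin d}
    {G : ι' → ℕ × Fin d} {H : κ → ℕ × Fin d}
    (h1 : ∀ i, ∃ j, H j = Sum.elim F G i) (h2 : ∀ j, ∃ i, Sum.elim F G i = H j) :
    mOf Z F ⊔ mOf Z G = mOf Z H := by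
  rw [mOf_sup]; exact mOf_congr h1 h2

end MOf

/-- Helper for equalities of pairs in `ℕ × Fin d`. -/
lemma pair_eq_pe {d : ℕ} {a b : ℕ} {i j : Fin d} (h : a = b) (h2 : i = j) :
    ((a, i) : ℕ × Fin d) = (b, j) := by subst h; subst h2; rfl

/-- Theorem 1 of the paper: let `{Z_t}` be a strictly stationary `d`-dimensional Gaussian
process (all finite-dimensional distributions Gaussian with positive definite covariance)
which is Markov of order `k ≥ 1`, and let `S` be a nonempty proper subset of the coordinates.
If either (1) for all `t > k`, `Z_{S,t} ⟂ (Z_{−S,t−1},…,Z_{−S,t−k}) | (Z_{S,t−1},…,Z_{S,t−k})`,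
or (2) for all `t > k+1`,
`Z_{S,t−k−1} ⟂ (Z_{−S,t−1},…,Z_{−S,t−k}) | (Z_{S,t−1},…,Z_{S,t−k})`,
then the subprocess `{Z_{S,t}}` is Markov of order `k`. -/
theorem stmt_2 {Ω : Type*} [MeasurableSpace Ω] [StandardBorelSpace Ω]
    (P : Measure Ω) [IsProbabilityMeasure P]
    {d : ℕ} (Z : ℕ → Ω → Fin d → ℝ) (hZ : ∀ t, Measurable (Z t))
    (k : ℕ) (hk : 1 ≤ k)
    -- (i) all finite-dimensional distributions are Gaussian with positive definite covariance
    (hGauss : ∀ (m : ℕ) (t : Fin m → ℕ), StrictMono t → (∀ i, 1 ≤ t i) →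
      IsGaussianLaw (P.map fun ω (p : Fin m × Fin d) => Z (t p.1) ω p.2) ∧
        (covMatrix P fun ω (p : Fin m × Fin d) => Z (t p.1) ω p.2).PosDef)
    -- (ii) strict stationarity
    (hStat : ∀ (m s t : ℕ),
      P.map (fun ω (p : Fin m × Fin d) => Z (s + 1 + p.1) ω p.2)
        = P.map (fun ω (p : Fin m × Fin d) => Z (t + 1 + p.1) ω p.2))
    -- (iii) Markov of order k
    (hMarkov : ∀ t, k + 1 < t →
      CondIndepFun
        (MeasurableSpace.comap
          (fun ω (p : Fin k × Fin d) => Z (t - 1 - p.1) ω p.2) inferInstance)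
        (measurable_reindex hZ _ _).comap_le
        (Z t) (fun ω (p : Fin (t - k - 1) × Fin d) => Z (p.1 + 1) ω p.2) P)
    (S : Finset (Fin d)) (hS1 : S.Nonempty) (hS2 : S ≠ Finset.univ)
    -- at least one of the two sufficient conditions holds
    (hCond :
      (∀ t, k < t →
        CondIndepFun
          (MeasurableSpace.comap
            (fun ω (p : Fin k × {i // i ∈ S}) => Z (t - 1 - p.1) ω p.2) inferInstance)
          (measurable_reindex hZ _ _).comap_le
          (fun ω (i : {i // i ∈ S}) => Z t ω i)
          (fun ω (p : Fin k × {i // i ∉ S}) => Z (t - 1 - p.1) ω p.2) P)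
      ∨
      (∀ t, k + 1 < t →
        CondIndepFun
          (MeasurableSpace.comap
            (fun ω (p : Fin k × {i // i ∈ S}) => Z (t - 1 - p.1) ω p.2) inferInstance)
          (measurable_reindex hZ _ _).comap_le
          (fun ω (i : {i // i ∈ S}) => Z (t - k - 1) ω i)
          (fun ω (p : Fin k × {i // i ∉ S}) => Z (t - 1 - p.1) ω p.2) P)) :
    -- conclusion: the subprocess is Markov of order k
    ∀ t l, k < l → l < t →
      CondIndepFun
        (MeasurableSpace.comap
          (fun ω (p : Fin (l - 1) × {i // i ∈ S}) => Z (t - 1 - p.1) ω p.2) inferInstance)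
        (measurable_reindex hZ _ _).comap_le
        (fun ω (i : {i // i ∈ S}) => Z t ω i)
        (fun ω (i : {i // i ∈ S}) => Z (t - l) ω i) P := by
  intro t l hkl hlt
  have hrS : Measurable (fun v : Fin d → ℝ => fun i : {i // i ∈ S} => v ↑i) :=
    measurable_pi_lambda _ fun i => measurable_pi_apply _
  have e_goal : MeasurableSpace.comap
      (fun ω (p : Fin (l - 1) × {i // i ∈ S}) => Z (t - 1 - ↑p.1) ω ↑p.2) inferInstance
      = mOf Z (fun p : Fin (l - 1) × {i // i ∈ S} => ((t - 1 - ↑p.1 : ℕ), (↑p.2 : Fin d))) :=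
    mOf_eq2 Z _ _
  rcases hCond with h1 | h2
  · -- Branch (1)
    have ht2 : k + 1 < t := by omega
    have e_lag : MeasurableSpace.comap
        (fun ω (p : Fin k × Fin d) => Z (t - 1 - ↑p.1) ω p.2) inferInstance
        = mOf Z (fun p : Fin k × Fin d => ((t - 1 - ↑p.1 : ℕ), p.2)) := mOf_eq2 Z _ _
    have e_past : MeasurableSpace.comap
        (fun ω (p : Fin (t - k - 1) × Fin d) => Z (↑p.1 + 1) ω p.2) inferInstance
        = mOf Z (fun p : Fin (t - k - 1) × Fin d => ((↑p.1 + 1 : ℕ), p.2)) := mOf_eq2 Z _ _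
    have e_SA : MeasurableSpace.comap
        (fun ω (p : Fin k × {i // i ∈ S}) => Z (t - 1 - ↑p.1) ω ↑p.2) inferInstance
        = mOf Z (fun p : Fin k × {i // i ∈ S} => ((t - 1 - ↑p.1 : ℕ), (↑p.2 : Fin d))) :=
      mOf_eq2 Z _ _
    have e_negS : MeasurableSpace.comap
        (fun ω (p : Fin k × {i // i ∉ S}) => Z (t - 1 - ↑p.1) ω ↑p.2) inferInstance
        = mOf Z (fun p : Fin k × {i // i ∉ S} => ((t - 1 - ↑p.1 : ℕ), (↑p.2 : Fin d))) :=
      mOf_eq2 Z _ _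
    have e_g : MeasurableSpace.comap
        (fun ω (i : {i // i ∈ S}) => Z (t - l) ω ↑i) inferInstance
        = mOf Z (fun i : {i // i ∈ S} => ((t - l : ℕ), (↑i : Fin d))) := mOf_eq2 Z _ _
    refine condIndepFun_of_between
      (mA := MeasurableSpace.comap
        (fun ω (p : Fin k × {i // i ∈ S}) => Z (t - 1 - ↑p.1) ω ↑p.2) inferInstance)
      (mB := mOf Z (fun p : Fin (t - 1) × Fin d => ((↑p.1 + 1 : ℕ), p.2)))
      _ (mOf_le hZ _) ?_ ?_
      (measurable_reindex hZ _ _) (measurable_reindex hZ _ _) ?_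
    · -- mA ≤ m'
      rw [e_SA, e_goal]
      refine mOf_le_mOf ?_
      rintro ⟨a, i⟩
      exact ⟨(⟨a.val, by have := a.isLt; omega⟩, i), rfl⟩
    · -- m' ⊔ σ(g) ≤ mB
      rw [e_goal, e_g]
      refine sup_le (mOf_le_mOf ?_) (mOf_le_mOf ?_)
      · rintro ⟨a, i⟩
        exact ⟨(⟨t - 2 - a.val, by have := a.isLt; omega⟩, ↑i),
          pair_eq_pe (by show t - 2 - a.val + 1 = t - 1 - a.val
                         have := a.isLt; omega) rfl⟩
      · intro i
        exact ⟨(⟨t - l - 1, by omega⟩, ↑i),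
          pair_eq_pe (by show t - l - 1 + 1 = t - l; omega) rfl⟩
    · -- H
      intro s hs
      have hJB : mOf Z (fun p : Fin (t - 1) × Fin d => ((↑p.1 + 1 : ℕ), p.2))
          = MeasurableSpace.comap
              (fun ω (p : Fin k × Fin d) => Z (t - 1 - ↑p.1) ω p.2) inferInstance
            ⊔ MeasurableSpace.comap
              (fun ω (p : Fin (t - k - 1) × Fin d) => Z (↑p.1 + 1) ω p.2) inferInstance := by
        rw [e_lag, e_past]
        refine (mOf_sup_eq ?_ ?_).symm
        · rintro (⟨a, i⟩ | ⟨a, i⟩)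
          · exact ⟨(⟨t - 2 - a.val, by have := a.isLt; omega⟩, i),
              pair_eq_pe (by show t - 2 - a.val + 1 = t - 1 - a.val
                             have := a.isLt; omega) rfl⟩
          · exact ⟨(⟨a.val, by have := a.isLt; omega⟩, i), rfl⟩
        · rintro ⟨a, i⟩
          by_cases hc : a.val + 1 ≤ t - k - 1
          · exact ⟨Sum.inr (⟨a.val, by have := a.isLt; omega⟩, i), rfl⟩
          · exact ⟨Sum.inl (⟨t - 2 - a.val, by have := a.isLt; omega⟩, i),
              pair_eq_pe (by show t - 1 - (t - 2 - a.val) = a.val + 1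
                             have := a.isLt; omega) rfl⟩
      have hJ2 : MeasurableSpace.comap
            (fun ω (p : Fin k × Fin d) => Z (t - 1 - ↑p.1) ω p.2) inferInstance
          = MeasurableSpace.comap
              (fun ω (p : Fin k × {i // i ∈ S}) => Z (t - 1 - ↑p.1) ω ↑p.2) inferInstance
            ⊔ MeasurableSpace.comap
              (fun ω (p : Fin k × {i // i ∉ S}) => Z (t - 1 - ↑p.1) ω ↑p.2) inferInstance := by
        rw [e_lag, e_SA, e_negS]
        refine (mOf_sup_eq ?_ ?_).symm
        · rintro (⟨a, i⟩ | ⟨a, i⟩)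
          · exact ⟨(a, ↑i), rfl⟩
          · exact ⟨(a, ↑i), rfl⟩
        · rintro ⟨a, i⟩
          by_cases hi : i ∈ S
          · exact ⟨Sum.inl (a, ⟨i, hi⟩), rfl⟩
          · exact ⟨Sum.inr (a, ⟨i, hi⟩), rfl⟩
      have step1 := condexp_eq_of_condIndepFun (hZ t) (measurable_reindex hZ _ _)
        (hMarkov t ht2) hJB (hrS hs)
      have step2 := condexp_eq_of_condIndepFun (measurable_reindex hZ _ _)
        (measurable_reindex hZ _ _) (h1 t (by omega)) hJ2 hs
      exact step1.trans step2
  · -- Branch (2)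
    have IND : ∀ n, k + n ≤ l → ∀ s' : Set (Fin d → ℝ), MeasurableSet s' →
        (P⟦(Z (t - l)) ⁻¹' s' |
            mOf Z (fun p : Fin (k + n) × Fin d => ((t - l + 1 + ↑p.1 : ℕ), p.2))⟧
          =ᵐ[P] P⟦(Z (t - l)) ⁻¹' s' |
            mOf Z (fun p : Fin k × Fin d => ((t - l + 1 + ↑p.1 : ℕ), p.2))⟧) := by
      intro n
      induction n with
      | zero => intro _ s' _; exact Filter.EventuallyEq.rfl
      | succ n ih =>
        intro hn s' hs'
        have hn' : k + n ≤ l := by omega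
        have stepA : CondIndepFun
            (mOf Z (fun p : Fin (k + n) × Fin d => ((t - l + 1 + ↑p.1 : ℕ), p.2)))
            (mOf_le hZ _)
            (Z (t - l + k + n + 1)) (Z (t - l)) P := by
          refine condIndepFun_of_between
            (mA := MeasurableSpace.comap
              (fun ω (p : Fin k × Fin d) => Z (t - l + k + n + 1 - 1 - ↑p.1) ω p.2)
              inferInstance)
            (mB := mOf Z (fun p : Fin (t - l + k + n) × Fin d => ((↑p.1 + 1 : ℕ), p.2)))
            _ (mOf_le hZ _) ?_ ?_ (hZ _) (hZ _) ?_
          · rw [show MeasurableSpace.comap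
                (fun ω (p : Fin k × Fin d) => Z (t - l + k + n + 1 - 1 - ↑p.1) ω p.2)
                inferInstance
                = mOf Z (fun p : Fin k × Fin d => ((t - l + k + n + 1 - 1 - ↑p.1 : ℕ), p.2))
                from mOf_eq2 Z _ _]
            refine mOf_le_mOf ?_
            rintro ⟨a, i⟩
            exact ⟨(⟨k + n - 1 - a.val, by have := a.isLt; omega⟩, i),
              pair_eq_pe (by show t - l + 1 + (k + n - 1 - a.val)
                                  = t - l + k + n + 1 - 1 - a.val
                             have := a.isLt; omega) rfl⟩
          · rw [show MeasurableSpace.comap (Z (t - l)) inferInstance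
                = mOf Z (fun i : Fin d => ((t - l : ℕ), i)) from mOf_eq2 Z _ _]
            refine sup_le (mOf_le_mOf ?_) (mOf_le_mOf ?_)
            · rintro ⟨a, i⟩
              exact ⟨(⟨t - l + a.val, by have := a.isLt; omega⟩, i),
                pair_eq_pe (by show t - l + a.val + 1 = t - l + 1 + a.val; omega) rfl⟩
            · intro i
              exact ⟨(⟨t - l - 1, by omega⟩, i),
                pair_eq_pe (by show t - l - 1 + 1 = t - l; omega) rfl⟩
          · intro s'' hs''
            refine condexp_eq_of_condIndepFun (hZ _) (measurable_reindex hZ _ _)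
              (hMarkov (t - l + k + n + 1) (by omega)) ?_ hs''
            rw [show MeasurableSpace.comap
                (fun ω (p : Fin k × Fin d) => Z (t - l + k + n + 1 - 1 - ↑p.1) ω p.2)
                inferInstance
                = mOf Z (fun p : Fin k × Fin d => ((t - l + k + n + 1 - 1 - ↑p.1 : ℕ), p.2))
                from mOf_eq2 Z _ _,
              show MeasurableSpace.comap
                (fun ω (p : Fin (t - l + k + n + 1 - k - 1) × Fin d) => Z (↑p.1 + 1) ω p.2)
                inferInstance
                = mOf Z (fun p : Fin (t - l + k + n + 1 - k - 1) × Fin d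
                    => ((↑p.1 + 1 : ℕ), p.2)) from mOf_eq2 Z _ _]
            refine (mOf_sup_eq ?_ ?_).symm
            · rintro (⟨a, i⟩ | ⟨a, i⟩)
              · exact ⟨(⟨t - l + k + n - 1 - a.val, by have := a.isLt; omega⟩, i),
                  pair_eq_pe (by show t - l + k + n - 1 - a.val + 1
                                      = t - l + k + n + 1 - 1 - a.val
                                 have := a.isLt; omega) rfl⟩
              · exact ⟨(⟨a.val, by have := a.isLt; omega⟩, i), rfl⟩
            · rintro ⟨a, i⟩
              by_cases hc : a.val + 1 ≤ t - l + k + n + 1 - k - 1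
              · exact ⟨Sum.inr (⟨a.val, by omega⟩, i), rfl⟩
              · exact ⟨Sum.inl (⟨t - l + k + n - 1 - a.val, by have := a.isLt; omega⟩, i),
                  pair_eq_pe (by show t - l + k + n + 1 - 1 - (t - l + k + n - 1 - a.val)
                                      = a.val + 1
                                 have := a.isLt; omega) rfl⟩
        have hJ : mOf Z (fun p : Fin (k + (n + 1)) × Fin d => ((t - l + 1 + ↑p.1 : ℕ), p.2))
            = mOf Z (fun p : Fin (k + n) × Fin d => ((t - l + 1 + ↑p.1 : ℕ), p.2))
              ⊔ MeasurableSpace.comap (Z (t - l + k + n + 1)) inferInstance := by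
          rw [show MeasurableSpace.comap (Z (t - l + k + n + 1)) inferInstance
              = mOf Z (fun i : Fin d => ((t - l + k + n + 1 : ℕ), i)) from mOf_eq2 Z _ _]
          refine (mOf_sup_eq ?_ ?_).symm
          · rintro (⟨a, i⟩ | i)
            · exact ⟨(⟨a.val, by have := a.isLt; omega⟩, i), rfl⟩
            · exact ⟨(⟨k + n, by omega⟩, i),
                pair_eq_pe (by show t - l + 1 + (k + n) = t - l + k + n + 1; omega) rfl⟩
          · rintro ⟨a, i⟩
            by_cases hc : a.val < k + n
            · exact ⟨Sum.inl (⟨a.val, hc⟩, i), rfl⟩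
            · exact ⟨Sum.inr i,
                pair_eq_pe (by show t - l + k + n + 1 = t - l + 1 + a.val
                               have := a.isLt; omega) rfl⟩
        exact (condexp_eq_of_condIndepFun (hZ (t - l)) (hZ (t - l + k + n + 1))
          stepA.symm hJ hs').trans (ih hn' s' hs')
    -- final assembly for branch (2)
    have e_SA2 : MeasurableSpace.comap
        (fun ω (p : Fin k × {i // i ∈ S}) => Z (t - l + k + 1 - 1 - ↑p.1) ω ↑p.2) inferInstance
        = mOf Z (fun p : Fin k × {i // i ∈ S}
            => ((t - l + k + 1 - 1 - ↑p.1 : ℕ), (↑p.2 : Fin d))) := mOf_eq2 Z _ _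
    have e_negS2 : MeasurableSpace.comap
        (fun ω (p : Fin k × {i // i ∉ S}) => Z (t - l + k + 1 - 1 - ↑p.1) ω ↑p.2) inferInstance
        = mOf Z (fun p : Fin k × {i // i ∉ S}
            => ((t - l + k + 1 - 1 - ↑p.1 : ℕ), (↑p.2 : Fin d))) := mOf_eq2 Z _ _
    have e_gt : MeasurableSpace.comap
        (fun ω (i : {i // i ∈ S}) => Z t ω ↑i) inferInstance
        = mOf Z (fun i : {i // i ∈ S} => ((t : ℕ), (↑i : Fin d))) := mOf_eq2 Z _ _
    refine CondIndepFun.symm (condIndepFun_of_between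
      (mA := MeasurableSpace.comap
        (fun ω (p : Fin k × {i // i ∈ S}) => Z (t - l + k + 1 - 1 - ↑p.1) ω ↑p.2)
        inferInstance)
      (mB := mOf Z (fun p : Fin (k + (l - k)) × Fin d => ((t - l + 1 + ↑p.1 : ℕ), p.2)))
      _ (mOf_le hZ _) ?_ ?_
      (measurable_reindex hZ _ _) (measurable_reindex hZ _ _) ?_)
    · -- mA ≤ m'
      rw [e_SA2, e_goal]
      refine mOf_le_mOf ?_
      rintro ⟨a, i⟩
      exact ⟨(⟨l - 1 - k + a.val, by have := a.isLt; omega⟩, i),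
        pair_eq_pe (by show t - 1 - (l - 1 - k + a.val) = t - l + k + 1 - 1 - a.val
                       have := a.isLt; omega) rfl⟩
    · -- m' ⊔ σ(Z_{S,t}) ≤ mB
      rw [e_goal, e_gt]
      refine sup_le (mOf_le_mOf ?_) (mOf_le_mOf ?_)
      · rintro ⟨a, i⟩
        exact ⟨(⟨l - 2 - a.val, by have := a.isLt; omega⟩, ↑i),
          pair_eq_pe (by show t - l + 1 + (l - 2 - a.val) = t - 1 - a.val
                         have := a.isLt; omega) rfl⟩
      · intro i
        exact ⟨(⟨l - 1, by omega⟩, ↑i),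
          pair_eq_pe (by show t - l + 1 + (l - 1) = t; omega) rfl⟩
    · -- H
      intro s hs
      have hJ0 : mOf Z (fun p : Fin k × Fin d => ((t - l + 1 + ↑p.1 : ℕ), p.2))
          = MeasurableSpace.comap
              (fun ω (p : Fin k × {i // i ∈ S}) => Z (t - l + k + 1 - 1 - ↑p.1) ω ↑p.2)
              inferInstance
            ⊔ MeasurableSpace.comap
              (fun ω (p : Fin k × {i // i ∉ S}) => Z (t - l + k + 1 - 1 - ↑p.1) ω ↑p.2)
              inferInstance := by
        rw [e_SA2, e_negS2]
        refine (mOf_sup_eq ?_ ?_).symm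
        · rintro (⟨a, i⟩ | ⟨a, i⟩)
          · exact ⟨(⟨k - 1 - a.val, by have := a.isLt; omega⟩, ↑i),
              pair_eq_pe (by show t - l + 1 + (k - 1 - a.val) = t - l + k + 1 - 1 - a.val
                             have := a.isLt; omega) rfl⟩
          · exact ⟨(⟨k - 1 - a.val, by have := a.isLt; omega⟩, ↑i),
              pair_eq_pe (by show t - l + 1 + (k - 1 - a.val) = t - l + k + 1 - 1 - a.val
                             have := a.isLt; omega) rfl⟩
        · rintro ⟨a, i⟩
          by_cases hi : i ∈ S
          · exact ⟨Sum.inl (⟨k - 1 - a.val, by have := a.isLt; omega⟩, ⟨i, hi⟩),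
              pair_eq_pe (by show t - l + k + 1 - 1 - (k - 1 - a.val) = t - l + 1 + a.val
                             have := a.isLt; omega) rfl⟩
          · exact ⟨Sum.inr (⟨k - 1 - a.val, by have := a.isLt; omega⟩, ⟨i, hi⟩),
              pair_eq_pe (by show t - l + k + 1 - 1 - (k - 1 - a.val) = t - l + 1 + a.val
                             have := a.isLt; omega) rfl⟩
      have step2 := condexp_eq_of_condIndepFun (measurable_reindex hZ _ _)
        (measurable_reindex hZ _ _) (h2 (t - l + k + 1) (by omega)) hJ0 hs
      rw [show t - l + k + 1 - k - 1 = t - l from by omega] at step2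
      exact (IND (l - k) (by omega) _ (hrS hs)).trans step2
end

section
/- Let Σ be a positive definite real symmetric matrix indexed by a four-part sum type α ⊕ β ⊕ γ ⊕ δ, with the four blocks labelled A, B, V, W. If Σ_{A,B|(V,W)} = 0, and either Σ_{A,W|V} = 0 or Σ_{B,W|V} = 0, then Σ_{A,B|V} = 0. -/
open Matrix

lemma posDef_submatrix_of_injective {n m : Type*} [Fintype n] [Fintype m] [DecidableEq n]
    {M : Matrix n n ℝ} (hM : M.PosDef) {e : m → n} (he : Function.Injective e) :
    (M.submatrix e e).PosDef := by
  exact hM.submatrix he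

lemma key_alg {k1 k2 k3 k4 : Type*} [Fintype k3] [Fintype k4]
    (SAB : Matrix k1 k2 ℝ) (a : Matrix k1 k3 ℝ) (c : Matrix k1 k4 ℝ)
    (b : Matrix k3 k2 ℝ) (d : Matrix k4 k2 ℝ)
    (Q : Matrix k3 k4 ℝ) (Qt : Matrix k4 k3 ℝ)
    (iP : Matrix k3 k3 ℝ) (iS : Matrix k4 k4 ℝ) :
    SAB - fromCols a c *
      (fromBlocks (iP + iP * Q * iS * Qt * iP) (-(iP * Q * iS)) (-(iS * Qt * iP)) iS) *
      fromRows b d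
    = (SAB - a * iP * b) - (c - a * iP * Q) * iS * (d - Qt * iP * b) := by
  rw [fromCols_mul_fromBlocks, fromCols_mul_fromRows]
  simp only [Matrix.mul_add, Matrix.add_mul, Matrix.mul_sub, Matrix.sub_mul, Matrix.mul_neg,
    Matrix.neg_mul, Matrix.mul_assoc]
  abel

/-- The partial covariance `Σ_{X,Y|Z} = Σ_{X,Y} − Σ_{X,Z} (Σ_{Z,Z})⁻¹ Σ_{Z,Y}`, for blocks
given by index maps `f, g, h` into the index type of `S`. -/
noncomputable def pcov {ι κ₁ κ₂ κ₃ : Type*} [Fintype κ₃] [DecidableEq κ₃]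
    (S : Matrix ι ι ℝ) (f : κ₁ → ι) (g : κ₂ → ι) (h : κ₃ → ι) : Matrix κ₁ κ₂ ℝ :=
  S.submatrix f g - S.submatrix f h * (S.submatrix h h)⁻¹ * S.submatrix h g

/-- Matrix form of Lemma 1: for a positive definite symmetric matrix with blocks `A, B, V, W`,
if `Σ_{A,B|(V,W)} = 0` and (`Σ_{A,W|V} = 0` or `Σ_{B,W|V} = 0`), then `Σ_{A,B|V} = 0`. -/
theorem stmt_3 {α β γ δ : Type*} [Fintype α] [Fintype β] [Fintype γ] [Fintype δ]
    [DecidableEq α] [DecidableEq β] [DecidableEq γ] [DecidableEq δ]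
    (S : Matrix (α ⊕ β ⊕ γ ⊕ δ) (α ⊕ β ⊕ γ ⊕ δ) ℝ)
    (hPD : S.PosDef)
    (ιA : α → α ⊕ β ⊕ γ ⊕ δ) (ιB : β → α ⊕ β ⊕ γ ⊕ δ)
    (ιV : γ → α ⊕ β ⊕ γ ⊕ δ) (ιW : δ → α ⊕ β ⊕ γ ⊕ δ)
    (hιA : ιA = Sum.inl) (hιB : ιB = Sum.inr ∘ Sum.inl)
    (hιV : ιV = Sum.inr ∘ Sum.inr ∘ Sum.inl) (hιW : ιW = Sum.inr ∘ Sum.inr ∘ Sum.inr)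
    (h1 : pcov S ιA ιB (Sum.elim ιV ιW) = 0)
    (h2 : pcov S ιA ιW ιV = 0 ∨ pcov S ιB ιW ιV = 0) :
    pcov S ιA ιB ιV = 0 := by
  classical
  have hSsymm : Sᵀ = S := by
    have := hPD.1
    simpa [IsHermitian, conjTranspose_eq_transpose_of_trivial] using this.eq
  have hVinj : Function.Injective ιV := by
    subst hιV; exact fun x y h => by simpa using h
  have hZinj : Function.Injective (Sum.elim ιV ιW) := by
    subst hιV hιW
    rintro (x | x) (y | y) h <;> simp_all
  set P := S.submatrix ιV ιV with hPdef
  set Q := S.submatrix ιV ιW with hQdef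
  set Qt := S.submatrix ιW ιV with hQtdef
  set R := S.submatrix ιW ιW with hRdef
  set a := S.submatrix ιA ιV with hadef
  set c := S.submatrix ιA ιW with hcdef
  set b := S.submatrix ιV ιB with hbdef
  set d := S.submatrix ιW ιB with hddef
  have hPpd : P.PosDef := posDef_submatrix_of_injective hPD hVinj
  haveI : Invertible P := hPpd.isUnit.invertible
  have hMeq : S.submatrix (Sum.elim ιV ιW) (Sum.elim ιV ιW) = fromBlocks P Q Qt R := by
    ext i j; cases i <;> cases j <;> rfl
  have hMpd : (fromBlocks P Q Qt R).PosDef := hMeq ▸ posDef_submatrix_of_injective hPD hZinj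
  haveI : Invertible (fromBlocks P Q Qt R) := hMpd.isUnit.invertible
  haveI hSch : Invertible (R - Qt * ⅟P * Q) := invertibleOfFromBlocks₁₁Invertible P Q Qt R
  have hcols : S.submatrix ιA (Sum.elim ιV ιW) = fromCols a c := by
    ext i j; cases j <;> rfl
  have hrows : S.submatrix (Sum.elim ιV ιW) ιB = fromRows b d := by
    ext i j; cases i <;> rfl
  have hinv : (fromBlocks P Q Qt R)⁻¹ =
      fromBlocks (⅟P + ⅟P * Q * ⅟(R - Qt * ⅟P * Q) * Qt * ⅟P) (-(⅟P * Q * ⅟(R - Qt * ⅟P * Q)))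
        (-(⅟(R - Qt * ⅟P * Q) * Qt * ⅟P)) (⅟(R - Qt * ⅟P * Q)) := by
    rw [← invOf_eq_nonsing_inv, invOf_fromBlocks₁₁_eq]
  have h1' : (S.submatrix ιA ιB - a * ⅟P * b)
      - (c - a * ⅟P * Q) * ⅟(R - Qt * ⅟P * Q) * (d - Qt * ⅟P * b) = 0 := by
    rw [← key_alg, ← hinv, ← hcols, ← hrows, ← hMeq]
    exact h1
  have hiP : ⅟P = P⁻¹ := invOf_eq_nonsing_inv P
  have hgoal : pcov S ιA ιB ιV
      = (c - a * ⅟P * Q) * ⅟(R - Qt * ⅟P * Q) * (d - Qt * ⅟P * b) := by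
    rw [sub_eq_zero] at h1'
    rw [pcov, ← hiP]
    exact h1'
  rcases h2 with h2 | h2
  · have hz : c - a * ⅟P * Q = 0 := by
      rw [hiP]
      simpa [pcov] using h2
    rw [hgoal, hz, Matrix.zero_mul, Matrix.zero_mul]
  · have hz : d - Qt * ⅟P * b = 0 := by
      have h3 := congrArg Matrix.transpose h2
      have hPT : Pᵀ = P := by rw [hPdef, transpose_submatrix, hSsymm]
      rw [hiP]
      simpa [pcov, transpose_sub, transpose_mul, transpose_nonsing_inv, transpose_submatrix,
        hSsymm, hPT, Matrix.mul_assoc, ← hPdef, ← hQtdef, ← hbdef, ← hddef] using h3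
    rw [hgoal, hz, Matrix.mul_zero]
end

section
/- Let a₁₂, a₂₂ ∈ ℝ with a₂₂² < 1 and set c = 1/(1 − a₂₂²). Let M be the 3×3 real matrix with all three diagonal entries equal to c·(1 + a₁₂² − a₂₂²), with entries in positions (1,2), (2,1), (2,3), (3,2) equal to c·a₁₂²·a₂₂, and with entries in positions (1,3), (3,1) equal to c·a₁₂²·a₂₂². Then the partial correlation of the first and third coordinates given the second, namely (M₁₃ − M₁₂·M₂₃/M₂₂) / (M₁₁ − M₁₂²/M₂₂), equals a₁₂²·a₂₂²·(1 − a₂₂²) / ((1 + a₁₂² − a₂₂²)² − a₁₂⁴·a₂₂²); in particular both M₂₂ and M₁₁ − M₁₂²/M₂₂ are strictly positive, so the expression is well defined. -/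
open Matrix

/-- For the stationary covariance matrix `M` of `(Y_{1,t}, Y_{1,t-1}, Y_{1,t-2})` in the
bivariate Gaussian VAR(1) process with coefficients `a₁₂, a₂₂` (with `a₂₂² < 1`),
the partial correlation of the first and third coordinates given the second equals
`a₁₂²·a₂₂²·(1 − a₂₂²) / ((1 + a₁₂² − a₂₂²)² − a₁₂⁴·a₂₂²)`, and in particular
`M₂₂` and `M₁₁ − M₁₂²/M₂₂` are strictly positive. -/
theorem stmt_7 (a12 a22 : ℝ) (h : a22 ^ 2 < 1) (c : ℝ) (hc : c = 1 / (1 - a22 ^ 2))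
    (M : Matrix (Fin 3) (Fin 3) ℝ)
    (hM : M = !![c * (1 + a12 ^ 2 - a22 ^ 2), c * (a12 ^ 2 * a22), c * (a12 ^ 2 * a22 ^ 2);
                 c * (a12 ^ 2 * a22), c * (1 + a12 ^ 2 - a22 ^ 2), c * (a12 ^ 2 * a22);
                 c * (a12 ^ 2 * a22 ^ 2), c * (a12 ^ 2 * a22), c * (1 + a12 ^ 2 - a22 ^ 2)]) :
    0 < M 1 1 ∧ 0 < M 0 0 - M 0 1 ^ 2 / M 1 1 ∧
      (M 0 2 - M 0 1 * M 1 2 / M 1 1) / (M 0 0 - M 0 1 ^ 2 / M 1 1)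
        = a12 ^ 2 * a22 ^ 2 * (1 - a22 ^ 2)
            / ((1 + a12 ^ 2 - a22 ^ 2) ^ 2 - a12 ^ 4 * a22 ^ 2) := by
  have h1 : (0:ℝ) < 1 - a22 ^ 2 := by linarith
  have hcpos : 0 < c := by rw [hc]; positivity
  have hd : 0 < 1 + a12 ^ 2 - a22 ^ 2 := by nlinarith [sq_nonneg a12]
  have ha1 : a22 < 1 := by nlinarith
  have ha2 : -1 < a22 := by nlinarith
  have hl : 0 < (1 + a12 ^ 2 - a22 ^ 2) - a12 ^ 2 * a22 := by nlinarith [sq_nonneg a12]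
  have hr : 0 < (1 + a12 ^ 2 - a22 ^ 2) + a12 ^ 2 * a22 := by nlinarith [sq_nonneg a12]
  have hd2 : 0 < (1 + a12 ^ 2 - a22 ^ 2) ^ 2 - a12 ^ 4 * a22 ^ 2 := by
    nlinarith [mul_pos hl hr]
  subst hM
  simp only [Matrix.of_apply, Matrix.cons_val_zero, Matrix.cons_val_one, Matrix.head_cons,
    Matrix.cons_val_two, Matrix.tail_cons, Matrix.cons_val_fin_one]
  have hM11 : 0 < c * (1 + a12 ^ 2 - a22 ^ 2) := mul_pos hcpos hd
  have hDpos : 0 < c * (1 + a12 ^ 2 - a22 ^ 2) -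
      (c * (a12 ^ 2 * a22)) ^ 2 / (c * (1 + a12 ^ 2 - a22 ^ 2)) := by
    rw [sub_pos, div_lt_iff₀ hM11]
    nlinarith [mul_pos hcpos hcpos, mul_pos (mul_pos hcpos hcpos) hd2]
  refine ⟨hM11, hDpos, ?_⟩
  rw [div_eq_div_iff hDpos.ne' hd2.ne']
  subst hc
  field_simp
  ring
end

section
/- For every real number ρ₀ with 0.15 < ρ₀ < 1, the 4×4 real matrix [[1, 0.9, ρ₀, −0.9ρ₀], [0.9, 1, 0.9ρ₀, ρ₀], [ρ₀, 0.9ρ₀, 1, −0.9], [−0.9ρ₀, ρ₀, −0.9, 1]] is not positive definite. -/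
open Matrix

/-- The correlation matrix of `(Z_{1,t}, Z_{1,t−1}, Z_{2,t}, Z_{2,t−1})` for the margin-closed
bivariate VAR(1) model with `ρ_{11,1} = 0.9`, `ρ_{22,1} = −0.9` and contemporaneous
cross-correlation `ρ₀` fails to be positive definite for every `ρ₀ ∈ (0.15, 1)`. -/
theorem stmt_12 (ρ : ℝ) (h1 : 0.15 < ρ) (h2 : ρ < 1) :
    ¬ (!![1, 0.9, ρ, -0.9 * ρ;
          0.9, 1, 0.9 * ρ, ρ;
          ρ, 0.9 * ρ, 1, -0.9;
          -0.9 * ρ, ρ, -0.9, 1] : Matrix (Fin 4) (Fin 4) ℝ).PosDef := by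
  intro hpd
  have hx : (![1, -1, 9*ρ, 9*ρ] : Fin 4 → ℝ) ≠ 0 := by
    intro h
    have := congrFun h 0
    simp at this
  have hq := hpd.dotProduct_mulVec_pos hx
  simp only [Matrix.mulVec, dotProduct, Fin.sum_univ_four, Matrix.cons_val_zero,
    Matrix.cons_val_one, Matrix.head_cons, Matrix.cons_val_fin_one, Matrix.cons_val',
    Matrix.empty_val', Matrix.cons_val_two, Matrix.cons_val_three, Matrix.head_fin_const,
    Matrix.tail_cons, Matrix.of_apply, star_one, star_neg, RCLike.star_def] at hq
  simp only [show (star ![1, -1, 9*ρ, 9*ρ] : Fin 4 → ℝ) = ![1, -1, 9*ρ, 9*ρ] from rfl, Matrix.cons_val_zero, Matrix.cons_val_one, Matrix.head_cons, Matrix.cons_val_two, Matrix.cons_val_three, Matrix.tail_cons] at hq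
  nlinarith [sq_nonneg ρ, hq]
end

section
/- Let n be a finite index type, let Σ₀ and Σ₁ be n×n real matrices with Σ₀ invertible, let s be an n×1 real column matrix, and let r ∈ ℝ. Form the (n+1)×(n+1) block matrix C = fromBlocks(Σ₀, s, sᵀ, (1)) and assume C is invertible. Then fromBlocks(Σ₁, Σ₁·Σ₀⁻¹·s, r·sᵀ, (r)) · C⁻¹ = fromBlocks(Σ₁·Σ₀⁻¹, 0, 0, (r)), i.e. the resulting coefficient matrix is block diagonal with blocks Σ₁Σ₀⁻¹ and r. -/
open Matrix

/-- Case 1 of Example 2: for the 3-dimensional VAR(1) with partition `{{1,2},{3}}`, when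
`Σ_{12,1} = Σ_{11,1}Σ_{11,0}⁻¹Σ_{12,0}` and `Σ_{12,−1} = ρ_{33,1}Σ_{12,0}`, the VAR(1)
coefficient matrix is block diagonal with blocks `S₁S₀⁻¹` and `r`. -/
theorem stmt_13 {n : Type*} [Fintype n] [DecidableEq n]
    (S₀ S₁ : Matrix n n ℝ) (hS₀ : IsUnit S₀.det)
    (s : Matrix n (Fin 1) ℝ) (r : ℝ)
    (hC : IsUnit (Matrix.fromBlocks S₀ s sᵀ (1 : Matrix (Fin 1) (Fin 1) ℝ)).det) :
    Matrix.fromBlocks S₁ (S₁ * S₀⁻¹ * s) (r • sᵀ) !![r]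
        * (Matrix.fromBlocks S₀ s sᵀ (1 : Matrix (Fin 1) (Fin 1) ℝ))⁻¹
      = Matrix.fromBlocks (S₁ * S₀⁻¹) 0 0 !![r] := by
  have h1 : Matrix.fromBlocks S₁ (S₁ * S₀⁻¹ * s) (r • sᵀ) !![r]
      = Matrix.fromBlocks (S₁ * S₀⁻¹) 0 0 !![r]
        * Matrix.fromBlocks S₀ s sᵀ (1 : Matrix (Fin 1) (Fin 1) ℝ) := by
    have hr : (!![r] : Matrix (Fin 1) (Fin 1) ℝ) * sᵀ = r • sᵀ := by
      ext i j
      fin_cases i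
      simp [Matrix.mul_apply, Fin.sum_univ_one]
    rw [Matrix.fromBlocks_multiply]
    simp [Matrix.mul_assoc, Matrix.nonsing_inv_mul _ hS₀, hr]
  rw [h1, Matrix.mul_assoc, Matrix.mul_nonsing_inv _ hC, Matrix.mul_one]
end
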